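/- arXiv:1210.0524 — 2 statements merged into one kernel-verified Lean document; each statement's English description precedes it below -/
import Mathlib

section
/- For any finite graph G, the game domination number satisfies γ(G) ≤ γ_g(G) ≤ 2γ(G) − 1, where γ(G) is the domination number. -/
open Finset

namespace DomGame

variable {V : Type*} [Fintype V] [DecidableEq V]

/-- Closed neighborhood of `v` in `G`, as a `Finset`. -/
noncomputable def cn (G : SimpleGraph V) (v : V) : Finset V :=
  haveI : DecidablePred (fun u : V => u = v ∨ G.Adj v u) := fun _ => Classical.propDecidable _
  Finset.univ.filter (fun u : V => u = v ∨ G.Adj v u)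

/-- Value (number of remaining moves, optimal play) of the domination game on `G`,
with fuel, where `D` is the set of already dominated vertices and `who = true`
means Dominator is to move (minimizing); `who = false` means Staller (maximizing). -/
noncomputable def auxVal (G : SimpleGraph V) : ℕ → Bool → Finset V → ℕ
  | 0, _, _ => 0
  | n + 1, who, D =>
    if D = Finset.univ then 0
    else
      haveI : DecidablePred (fun v : V => ¬ cn G v ⊆ D) := fun _ => Classical.propDecidable _
      let moves : Finset V := Finset.univ.filter (fun v : V => ¬ cn G v ⊆ D)
      if who then
        WithTop.untopD 0 ((moves.image (fun v => 1 + auxVal G n false (D ∪ cn G v))).min)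
      else
        moves.sup (fun v => 1 + auxVal G n true (D ∪ cn G v))

/-- Remaining moves of the domination game on the partially dominated graph `(G, D)`,
Dominator to move, both players optimal. -/
noncomputable def gVal (G : SimpleGraph V) (D : Finset V) : ℕ :=
  auxVal G (Fintype.card V) true D

/-- Remaining moves, Staller to move. -/
noncomputable def gVal' (G : SimpleGraph V) (D : Finset V) : ℕ :=
  auxVal G (Fintype.card V) false D

/-- The game domination number (Dominator starts). -/
noncomputable def gammaG (G : SimpleGraph V) : ℕ := gVal G ∅

/-- The Staller-start game domination number. -/
noncomputable def gammaG' (G : SimpleGraph V) : ℕ := gVal' G ∅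

/-- `S` is a dominating set of `G`. -/
def IsDomSet (G : SimpleGraph V) (S : Finset V) : Prop :=
  ∀ v : V, ∃ u ∈ S, u = v ∨ G.Adj u v

/-- The domination number of `G`. -/
noncomputable def gamma (G : SimpleGraph V) : ℕ :=
  sInf {n | ∃ S : Finset V, IsDomSet G S ∧ S.card = n}

end DomGame

/-!
Write `γ(G|D)` (`residualGamma G D`) for the least number of vertices whose closed
neighbourhoods cover every vertex outside the dominated set `D`. A single move lowers `γ(G|D)`
by at most one, which gives `γ(G) ≤ γ_g(G)`. Conversely, Dominator can always play a vertex of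
a minimum cover that still dominates a new vertex, lowering `γ(G|D)` by one, while Staller's
moves never raise it; so Dominator's value is at most `2γ(G|D) - 1` and Staller's at most
`2γ(G|D)`.
-/

lemma Finset.untopD_min_image_eq {α β : Type*} [LinearOrder β] (d : β) {s : Finset α}
    {f : α → β} {x : α} (hx : x ∈ s) (hmin : ∀ y ∈ s, f x ≤ f y) :
    WithTop.untopD d (s.image f).min = f x := by
  have : (s.image f).min = f x := le_antisymm (min_le (mem_image_of_mem f hx)) <|
    Finset.le_min fun _ hb => by
      obtain ⟨y, hy, rfl⟩ := mem_image.1 hb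
      exact WithTop.coe_le_coe.2 (hmin y hy)
  rw [this, WithTop.untopD_coe]

namespace DomGame

variable {V : Type*} [Fintype V] {G : SimpleGraph V} {u v : V}

lemma mem_cn : v ∈ cn G u ↔ v = u ∨ G.Adj u v := by
  simp [cn]

lemma self_mem_cn (u : V) : u ∈ cn G u := mem_cn.2 (Or.inl rfl)

variable [DecidableEq V] {D D' S : Finset V}

lemma card_compl_union_cn_lt (hv : ¬ cn G v ⊆ D) : #(D ∪ cn G v)ᶜ < #Dᶜ :=
  card_lt_card (compl_ssubset_compl.2 (left_lt_sup.2 hv))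

variable (G) in
def Covers (D S : Finset V) : Prop :=
  Dᶜ ⊆ S.biUnion (cn G)

lemma covers_empty_iff : Covers G ∅ S ↔ IsDomSet G S := by
  simp [Covers, IsDomSet, subset_iff, mem_cn, eq_comm]

lemma covers_univ (D : Finset V) : Covers G D univ := fun v _ =>
  mem_biUnion.2 ⟨v, mem_univ v, self_mem_cn v⟩

lemma Covers.mono (hS : Covers G D S) (h : D ⊆ D') : Covers G D' S :=
  (compl_subset_compl.2 h).trans hS

lemma Covers.insert (hS : Covers G (D ∪ cn G v) S) : Covers G D (insert v S) := by
  intro x hx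
  rw [biUnion_insert, mem_union]
  by_cases hxv : x ∈ cn G v
  · exact Or.inl hxv
  · exact Or.inr (hS (by simp_all))

lemma Covers.erase (hS : Covers G D S) (hv : v ∈ S) : Covers G (D ∪ cn G v) (S.erase v) := by
  intro x hx
  rw [compl_union, mem_inter] at hx
  obtain ⟨w, hw, hxw⟩ := mem_biUnion.1 (hS hx.1)
  have hwv : w ≠ v := by rintro rfl; exact mem_compl.1 hx.2 hxw
  exact mem_biUnion.2 ⟨w, mem_erase.2 ⟨hwv, hw⟩, hxw⟩

variable (G) in
noncomputable def residualGamma (D : Finset V) : ℕ :=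
  sInf {n | ∃ S : Finset V, Covers G D S ∧ #S = n}

lemma exists_covers_card_eq_residualGamma (D : Finset V) :
    ∃ S, Covers G D S ∧ #S = residualGamma G D :=
  Nat.sInf_mem (s := {n | ∃ S, Covers G D S ∧ #S = n}) ⟨_, univ, covers_univ D, rfl⟩

lemma residualGamma_le (hS : Covers G D S) : residualGamma G D ≤ #S :=
  Nat.sInf_le ⟨S, hS, rfl⟩

lemma gamma_eq_residualGamma_empty : gamma G = residualGamma G ∅ := by
  simp only [gamma, residualGamma, covers_empty_iff]

lemma residualGamma_univ : residualGamma G univ = 0 :=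
  Nat.le_zero.1 (residualGamma_le (S := ∅) (by simp [Covers]))

lemma residualGamma_pos (hD : D ≠ univ) : 0 < residualGamma G D := by
  obtain ⟨S, hS, hcard⟩ := exists_covers_card_eq_residualGamma (G := G) D
  refine hcard ▸ card_pos.2 (nonempty_iff_ne_empty.2 ?_)
  rintro rfl
  exact hD (by simpa [Covers] using hS)

lemma residualGamma_anti (h : D ⊆ D') : residualGamma G D' ≤ residualGamma G D := by
  obtain ⟨S, hS, hcard⟩ := exists_covers_card_eq_residualGamma (G := G) D
  exact hcard ▸ residualGamma_le (hS.mono h)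

lemma residualGamma_le_succ (v : V) : residualGamma G D ≤ residualGamma G (D ∪ cn G v) + 1 := by
  obtain ⟨S, hS, hcard⟩ := exists_covers_card_eq_residualGamma (G := G) (D ∪ cn G v)
  exact hcard ▸ (residualGamma_le hS.insert).trans (card_insert_le v S)

lemma exists_residualGamma_lt (hD : D ≠ univ) :
    ∃ v, ¬ cn G v ⊆ D ∧ residualGamma G (D ∪ cn G v) < residualGamma G D := by
  obtain ⟨S, hS, hcard⟩ := exists_covers_card_eq_residualGamma (G := G) D
  obtain ⟨v, hvS, hv⟩ : ∃ v ∈ S, ¬ cn G v ⊆ D := by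
    by_contra! h
    refine hD (compl_eq_empty_iff D |>.1 (subset_empty.1 fun x hx => ?_))
    obtain ⟨w, hw, hxw⟩ := mem_biUnion.1 (hS hx)
    exact absurd (h w hw hxw) (mem_compl.1 hx)
  refine ⟨v, hv, ?_⟩
  calc residualGamma G (D ∪ cn G v) ≤ #(S.erase v) := residualGamma_le (hS.erase hvS)
    _ < #S := card_erase_lt_of_mem hvS
    _ = residualGamma G D := hcard

lemma filter_not_cn_subset_nonempty (hD : D ≠ univ) :
    (univ.filter fun v => ¬ cn G v ⊆ D).Nonempty := by
  obtain ⟨v, hv⟩ : ∃ v, v ∉ D := by simpa [eq_univ_iff_forall] using hD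
  exact ⟨v, mem_filter.2 ⟨mem_univ v, fun h => hv (h (self_mem_cn v))⟩⟩

lemma isLeast_auxVal_succ_true (n : ℕ) (hD : D ≠ univ) :
    IsLeast ((fun v => 1 + auxVal G n false (D ∪ cn G v)) '' {v | ¬ cn G v ⊆ D})
      (auxVal G (n + 1) true D) := by
  obtain ⟨x, hx, hmin⟩ := exists_min_image _ (fun v => 1 + auxVal G n false (D ∪ cn G v))
    (filter_not_cn_subset_nonempty (G := G) hD)
  simp only [auxVal, if_neg hD, if_true]
  -- `auxVal` filters the legal moves with a classical `DecidablePred` instance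
  rw [filter_congr_decidable, untopD_min_image_eq 0 hx hmin]
  refine ⟨⟨x, (mem_filter.1 hx).2, rfl⟩, ?_⟩
  rintro _ ⟨y, hy, rfl⟩
  exact hmin y (mem_filter.2 ⟨mem_univ y, hy⟩)

lemma isGreatest_auxVal_succ_false (n : ℕ) (hD : D ≠ univ) :
    IsGreatest ((fun v => 1 + auxVal G n true (D ∪ cn G v)) '' {v | ¬ cn G v ⊆ D})
      (auxVal G (n + 1) false D) := by
  obtain ⟨x, hx, hmax⟩ := exists_mem_eq_sup _ (filter_not_cn_subset_nonempty (G := G) hD)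
    (fun v => 1 + auxVal G n true (D ∪ cn G v))
  simp only [auxVal, if_neg hD, Bool.false_eq_true, if_false]
  rw [filter_congr_decidable, hmax]
  refine ⟨⟨x, (mem_filter.1 hx).2, rfl⟩, ?_⟩
  rintro _ ⟨y, hy, rfl⟩
  exact hmax ▸ le_sup (f := fun v => 1 + auxVal G n true (D ∪ cn G v))
    (mem_filter.2 ⟨mem_univ y, hy⟩)

lemma exists_auxVal_succ_eq (n : ℕ) (who : Bool) (hD : D ≠ univ) :
    ∃ v, ¬ cn G v ⊆ D ∧ auxVal G (n + 1) who D = 1 + auxVal G n (!who) (D ∪ cn G v) := by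
  cases who
  · obtain ⟨v, hv, h⟩ := (isGreatest_auxVal_succ_false n hD).1
    exact ⟨v, hv, h.symm⟩
  · obtain ⟨v, hv, h⟩ := (isLeast_auxVal_succ_true n hD).1
    exact ⟨v, hv, h.symm⟩

lemma residualGamma_le_auxVal {n : ℕ} (who : Bool) (hn : #Dᶜ ≤ n) :
    residualGamma G D ≤ auxVal G n who D := by
  induction n generalizing who D with
  | zero =>
    rw [(compl_eq_empty_iff D).1 (card_eq_zero.1 (Nat.le_zero.1 hn)), residualGamma_univ]
    exact Nat.zero_le _
  | succ n ih =>
    rcases eq_or_ne D univ with rfl | hD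
    · simp [residualGamma_univ]
    obtain ⟨v, hv, hval⟩ := exists_auxVal_succ_eq (G := G) n who hD
    have hfuel : #(D ∪ cn G v)ᶜ ≤ n := by
      have := card_compl_union_cn_lt hv
      omega
    calc residualGamma G D ≤ residualGamma G (D ∪ cn G v) + 1 := residualGamma_le_succ v
      _ ≤ auxVal G n (!who) (D ∪ cn G v) + 1 := by grw [ih (!who) hfuel]
      _ = auxVal G (n + 1) who D := by rw [hval, add_comm]

lemma auxVal_le_two_mul_residualGamma (n : ℕ) (D : Finset V) :
    auxVal G n true D ≤ 2 * residualGamma G D - 1 ∧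
      auxVal G n false D ≤ 2 * residualGamma G D := by
  induction n generalizing D with
  | zero => simp [auxVal]
  | succ n ih =>
    rcases eq_or_ne D univ with rfl | hD
    · simp [auxVal]
    constructor
    · obtain ⟨v, hv, hlt⟩ := exists_residualGamma_lt (G := G) hD
      have hmove : auxVal G (n + 1) true D ≤ 1 + auxVal G n false (D ∪ cn G v) :=
        (isLeast_auxVal_succ_true n hD).2 ⟨v, hv, rfl⟩
      have hnext := (ih (D ∪ cn G v)).2
      omega
    · refine (isGreatest_auxVal_succ_false n hD).isLUB.2 ?_
      rintro _ ⟨v, -, rfl⟩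
      have hpos := residualGamma_pos (G := G) hD
      have hnext := (ih (D ∪ cn G v)).1
      have hanti := residualGamma_anti (G := G) (subset_union_left (s₂ := cn G v) (s₁ := D))
      dsimp only
      omega

end DomGame

/-- γ(G) ≤ γ_g(G) ≤ 2γ(G) − 1. -/
theorem stmt0 {V : Type*} [Fintype V] [DecidableEq V] (G : SimpleGraph V) :
    DomGame.gamma G ≤ DomGame.gammaG G ∧ DomGame.gammaG G ≤ 2 * DomGame.gamma G - 1 := by
  rw [DomGame.gammaG, DomGame.gVal, DomGame.gamma_eq_residualGamma_empty]
  exact ⟨DomGame.residualGamma_le_auxVal true (by simp),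
    (DomGame.auxVal_le_two_mul_residualGamma _ ∅).1⟩
end

section
/- (Continuation Principle) Let G be a graph and let A, B ⊆ V(G) with B ⊆ A. Let G_A and G_B denote the partially dominated games on G where the sets A and B, respectively, are already dominated. Then γ_g(G_A) ≤ γ_g(G_B) and γ_g'(G_A) ≤ γ_g'(G_B). -/
/-!
The values are antitone in the set of dominated vertices, by induction on the fuel for both
players at once. Staller's optimal move from the larger set is also legal from the smaller one.
Dominator copies his optimal move `v` from the smaller set `D` if it is still legal from the
larger set `D'`; otherwise `cn G v ⊆ D'`, so after any legal move from `D'` the dominated set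
contains `D ∪ cn G v`, the position his optimal move would have reached.
-/

open Finset

namespace DomGame

variable {V : Type*} [Fintype V] [DecidableEq V]

variable (G : SimpleGraph V) {D : Finset V} {v : V} (n : ℕ)

omit [DecidableEq V] in
lemma mem_cn_self : v ∈ cn G v := by
  simp [cn]

noncomputable def legalMoves (D : Finset V) : Finset V :=
  univ.filter fun v => ¬ cn G v ⊆ D

lemma mem_legalMoves : v ∈ legalMoves G D ↔ ¬ cn G v ⊆ D := by
  simp [legalMoves]

lemma legalMoves_antitone : Antitone (legalMoves G) :=
  fun _ _ h _ hv => (mem_legalMoves G).mpr fun hD => (mem_legalMoves G).mp hv (hD.trans h)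

lemma legalMoves_nonempty (hD : D ≠ univ) : (legalMoves G D).Nonempty := by
  obtain ⟨v, hv⟩ : ∃ v, v ∉ D := by simpa [Finset.eq_univ_iff_forall] using hD
  exact ⟨v, (mem_legalMoves G).mpr fun h => hv (h (mem_cn_self G))⟩

lemma auxVal_succ_univ (who : Bool) : auxVal G (n + 1) who univ = 0 := by
  simp [auxVal]

lemma auxVal_succ_true (hD : D ≠ univ) :
    auxVal G (n + 1) true D =
      ((legalMoves G D).image fun v => 1 + auxVal G n false (D ∪ cn G v)).min.untopD 0 := by
  rw [auxVal, if_neg hD, if_pos rfl, legalMoves]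
  congr!

lemma auxVal_succ_false (hD : D ≠ univ) :
    auxVal G (n + 1) false D =
      (legalMoves G D).sup fun v => 1 + auxVal G n true (D ∪ cn G v) := by
  rw [auxVal, if_neg hD, if_neg Bool.false_ne_true, legalMoves]
  congr!

lemma ne_univ_of_mem_legalMoves (hv : v ∈ legalMoves G D) : D ≠ univ := by
  rintro rfl
  exact (mem_legalMoves G).mp hv (subset_univ _)

lemma auxVal_succ_true_le (hv : v ∈ legalMoves G D) :
    auxVal G (n + 1) true D ≤ 1 + auxVal G n false (D ∪ cn G v) := by
  rw [auxVal_succ_true G n (ne_univ_of_mem_legalMoves G hv)]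
  exact WithTop.untopD_le (Finset.min_le (mem_image_of_mem _ hv))

lemma exists_auxVal_succ_true_eq (hD : D ≠ univ) :
    ∃ v ∈ legalMoves G D, auxVal G (n + 1) true D = 1 + auxVal G n false (D ∪ cn G v) := by
  set f := fun v => 1 + auxVal G n false (D ∪ cn G v)
  obtain ⟨v, hv, hmin⟩ := (legalMoves G D).exists_min_image f (legalMoves_nonempty G hD)
  have hmin' : ((legalMoves G D).image f).min = f v :=
    le_antisymm (Finset.min_le (mem_image_of_mem f hv)) (Finset.le_min (by simpa using hmin))
  exact ⟨v, hv, by rw [auxVal_succ_true G n hD, hmin']; rfl⟩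

lemma le_auxVal_succ_false (hv : v ∈ legalMoves G D) :
    1 + auxVal G n true (D ∪ cn G v) ≤ auxVal G (n + 1) false D := by
  rw [auxVal_succ_false G n (ne_univ_of_mem_legalMoves G hv)]
  exact Finset.le_sup (f := fun v => 1 + auxVal G n true (D ∪ cn G v)) hv

lemma exists_auxVal_succ_false_eq (hD : D ≠ univ) :
    ∃ v ∈ legalMoves G D, auxVal G (n + 1) false D = 1 + auxVal G n true (D ∪ cn G v) := by
  rw [auxVal_succ_false G n hD]
  exact (legalMoves G D).exists_mem_eq_sup (legalMoves_nonempty G hD) _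

theorem antitone_auxVal (who : Bool) : Antitone (auxVal G n who) := by
  induction n generalizing who with
  | zero => intro D D' _; simp [auxVal]
  | succ n ih =>
    intro D D' hDD'
    by_cases hD' : D' = univ
    · rw [hD', auxVal_succ_univ]; exact Nat.zero_le _
    have hD : D ≠ univ := fun h => hD' (univ_subset_iff.mp (h ▸ hDD'))
    have ih_move (who : Bool) (v : V) :
        auxVal G n who (D' ∪ cn G v) ≤ auxVal G n who (D ∪ cn G v) :=
      ih who (union_subset_union_left hDD')
    cases who with
    | false =>
      obtain ⟨v, hv, hval⟩ := exists_auxVal_succ_false_eq G n hD'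
      calc auxVal G (n + 1) false D' = 1 + auxVal G n true (D' ∪ cn G v) := hval
        _ ≤ 1 + auxVal G n true (D ∪ cn G v) := by gcongr; exact ih_move true v
        _ ≤ auxVal G (n + 1) false D := le_auxVal_succ_false G n (legalMoves_antitone G hDD' hv)
    | true =>
      obtain ⟨v, hv, hval⟩ := exists_auxVal_succ_true_eq G n hD
      rw [hval]
      by_cases hvD' : v ∈ legalMoves G D'
      · calc auxVal G (n + 1) true D' ≤ 1 + auxVal G n false (D' ∪ cn G v) :=
              auxVal_succ_true_le G n hvD'
          _ ≤ 1 + auxVal G n false (D ∪ cn G v) := by gcongr; exact ih_move false v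
      · have hvD : cn G v ⊆ D' := by simpa [mem_legalMoves] using hvD'
        obtain ⟨u, hu⟩ := legalMoves_nonempty G hD'
        have hsub : D ∪ cn G v ⊆ D' ∪ cn G u :=
          (union_subset hDD' hvD).trans subset_union_left
        calc auxVal G (n + 1) true D' ≤ 1 + auxVal G n false (D' ∪ cn G u) :=
              auxVal_succ_true_le G n hu
          _ ≤ 1 + auxVal G n false (D ∪ cn G v) := by gcongr; exact ih false hsub

end DomGame

/-- Continuation Principle: if B ⊆ A then γ_g(G_A) ≤ γ_g(G_B) and
γ_g'(G_A) ≤ γ_g'(G_B). -/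
theorem stmt2 {V : Type*} [Fintype V] [DecidableEq V] (G : SimpleGraph V)
    (A B : Finset V) (hBA : B ⊆ A) :
    DomGame.gVal G A ≤ DomGame.gVal G B ∧ DomGame.gVal' G A ≤ DomGame.gVal' G B :=
  ⟨DomGame.antitone_auxVal G _ true hBA, DomGame.antitone_auxVal G _ false hBA⟩
end
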